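/- arXiv:1508.05048 — 4 statements merged into one kernel-verified Lean document; each statement's English description precedes it below -/
import Mathlib

section
/- Let X and Y be compact Hausdorff spaces, j: Y → X a continuous surjection, and identify C(X) with the C*-subalgebra {f ∘ j : f ∈ C(X)} of C(Y). Then the map K ↦ {g ∈ C(Y) : g vanishes on K} is an inclusion-reversing bijection from the collection of closed sets K ⊆ Y with j(K) = X onto the collection of C(X)-disjoint closed two-sided ideals of C(Y). -/
open ContinuousMap

private lemma urysohnC {Z : Type*} [TopologicalSpace Z] [NormalSpace Z] [T1Space Z]
    {s : Set Z} {z : Z} (hs : IsClosed s) (hz : z ∉ s) :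
    ∃ g : C(Z, ℂ), (∀ w ∈ s, g w = 0) ∧ g z = 1 := by
  obtain ⟨f, hf0, hf1, -⟩ := exists_continuous_zero_one_of_isClosed hs isClosed_singleton
    (Set.disjoint_singleton_right.mpr hz)
  refine ⟨(⟨Complex.ofReal, Complex.continuous_ofReal⟩ : C(ℝ, ℂ)).comp f,
    fun w hw => ?_, ?_⟩
  · simp [hf0 hw]
  · simp [hf1 rfl]

/-- For compact Hausdorff X, Y and a continuous surjection j : Y → X
(with C(X) identified with {f ∘ j : f ∈ C(X)} ⊆ C(Y)), the map
K ↦ {g ∈ C(Y) : g vanishes on K} is an inclusion-reversing bijection from the closed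
subsets K ⊆ Y with j(K) = X onto the C(X)-disjoint closed ideals of C(Y). -/
theorem stmt_1 {X Y : Type*} [TopologicalSpace X] [CompactSpace X] [T2Space X]
    [TopologicalSpace Y] [CompactSpace Y] [T2Space Y]
    (j : C(Y, X)) (hj : Function.Surjective j) :
    ∃ Φ : {K : Set Y // IsClosed K ∧ j '' K = Set.univ} ≃
          {J : Ideal C(Y, ℂ) // IsClosed (J : Set C(Y, ℂ)) ∧
            ∀ f : C(X, ℂ), f.comp j ∈ J → f = 0},
      (∀ K : {K : Set Y // IsClosed K ∧ j '' K = Set.univ},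
        ((Φ K).1 : Set C(Y, ℂ)) = {g : C(Y, ℂ) | ∀ y ∈ K.1, g y = 0}) ∧
      (∀ K L : {K : Set Y // IsClosed K ∧ j '' K = Set.univ},
        (K.1 ⊆ L.1 ↔ (Φ L).1 ≤ (Φ K).1)) := by
  classical
  have hmem : ∀ (K : Set Y) (g : C(Y, ℂ)), g ∈ idealOfSet ℂ Kᶜ ↔ ∀ y ∈ K, g y = 0 := by
    intro K g
    simp only [mem_idealOfSet, compl_compl]
  refine ⟨⟨fun K => ⟨idealOfSet ℂ (K.1)ᶜ, idealOfSet_closed ℂ _, ?_⟩,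
    fun J => ⟨(setOfIdeal J.1)ᶜ, (setOfIdeal_open J.1).isClosed_compl, ?_⟩, ?_, ?_⟩, ?_, ?_⟩
  · -- disjointness
    intro f hf
    ext x
    obtain ⟨y, hyK, hyx⟩ := K.2.2 ▸ (Set.mem_univ x)
    have h0 := (hmem K.1 (f.comp j)).mp hf y hyK
    simp only [ContinuousMap.comp_apply] at h0
    simp only [ContinuousMap.zero_apply]
    rw [← hyx] at *
    exact h0
  · -- image of the recovered closed set is univ
    obtain ⟨J, hJc, hJd⟩ := J
    by_contra h
    obtain ⟨x, hx⟩ := (Set.ne_univ_iff_exists_notMem _).mp h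
    have hKclosed : IsClosed ((setOfIdeal J)ᶜ) := (setOfIdeal_open J).isClosed_compl
    have himK : IsClosed (j '' (setOfIdeal J)ᶜ) :=
      (hKclosed.isCompact.image j.continuous).isClosed
    obtain ⟨g, hg0, hg1⟩ := urysohnC himK hx
    have hgJ : g.comp j ∈ J := by
      rw [← idealOfSet_ofIdeal_isClosed hJc]
      intro y hy
      exact hg0 (j y) ⟨y, hy, rfl⟩
    have := hJd g hgJ
    rw [this] at hg1
    simp at hg1
  · -- left inverse
    intro K
    ext1
    show (setOfIdeal (idealOfSet ℂ (K.1)ᶜ))ᶜ = K.1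
    rw [setOfIdeal_ofSet_of_isOpen (𝕜 := ℂ) K.2.1.isOpen_compl, compl_compl]
  · -- right inverse
    intro J
    ext1
    show idealOfSet ℂ ((setOfIdeal J.1)ᶜ)ᶜ = J.1
    rw [compl_compl]
    exact idealOfSet_ofIdeal_isClosed J.2.1
  · -- description of Φ
    intro K
    ext g
    exact hmem K.1 g
  · -- order reversing
    intro K L
    constructor
    · intro hKL g hg
      exact (hmem K.1 g).mpr fun y hy => (hmem L.1 g).mp hg y (hKL hy)
    · intro hle y hyK
      by_contra hyL
      obtain ⟨g, hg0, hg1⟩ := urysohnC L.2.1 hyL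
      have hgL : g ∈ idealOfSet ℂ (L.1)ᶜ := (hmem L.1 g).mpr hg0
      have := (hmem K.1 g).mp (hle hgL) y hyK
      rw [this] at hg1
      simp at hg1
end

section
/- Let X and Y be compact Hausdorff spaces, j: Y → X a continuous surjection, and identify C(X) with the C*-subalgebra {f ∘ j : f ∈ C(X)} of C(Y). Then the set of C(X)-disjoint closed two-sided ideals of C(Y), partially ordered by inclusion, has exactly one maximal element if and only if the set of closed subsets K ⊆ Y with j(K) = X, partially ordered by inclusion, has exactly one minimal element. -/
open ContinuousMap

section Aux

variable {X Y : Type*} [TopologicalSpace X] [CompactSpace X] [T2Space X]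
    [TopologicalSpace Y] [CompactSpace Y] [T2Space Y]

private lemma mem_PhiK {K : Set Y} {f : C(Y, ℂ)} :
    f ∈ idealOfSet ℂ Kᶜ ↔ ∀ y ∈ K, f y = 0 := by
  rw [mem_idealOfSet]; simp [compl_compl]

/-- Key lemma: disjointness of the ideal of K iff j '' K = univ. -/
private lemma keyA (j : C(Y, X)) {K : Set Y} (hK : IsClosed K) :
    (∀ f : C(X, ℂ), f.comp j ∈ idealOfSet ℂ Kᶜ → f = 0) ↔ j '' K = Set.univ := by
  constructor
  · intro h
    by_contra hne
    obtain ⟨x, hx⟩ := (Set.ne_univ_iff_exists_notMem _).mp hne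
    have hcpt : IsClosed (j '' K) := (hK.isCompact.image j.continuous).isClosed
    obtain ⟨f, hf0, hf1, -⟩ := exists_continuous_zero_one_of_isClosed hcpt
      isClosed_singleton (Set.disjoint_singleton_right.mpr hx)
    set g : C(X, ℂ) := (⟨Complex.ofReal, Complex.continuous_ofReal⟩ : C(ℝ, ℂ)).comp f
    have hg : g.comp j ∈ idealOfSet ℂ Kᶜ := by
      rw [mem_PhiK]
      intro y hy
      have : f (j y) = 0 := hf0 (Set.mem_image_of_mem j hy)
      simp [g, this]
    have := h g hg
    have hgx : g x = 1 := by simp [g, hf1 rfl]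
    rw [this] at hgx
    simpa using hgx
  · intro h f hf
    ext x
    have hx : x ∈ j '' K := h ▸ Set.mem_univ x
    obtain ⟨y, hy, rfl⟩ := hx
    simpa using mem_PhiK.mp hf y hy

end Aux

/-- For compact Hausdorff X, Y and a continuous surjection j : Y → X,
the collection of C(X)-disjoint closed ideals of C(Y) has exactly one maximal element
iff the collection of closed K ⊆ Y with j(K) = X has exactly one minimal element. -/
theorem stmt_2 {X Y : Type*} [TopologicalSpace X] [CompactSpace X] [T2Space X]
    [TopologicalSpace Y] [CompactSpace Y] [T2Space Y]
    (j : C(Y, X)) (hj : Function.Surjective j) :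
    (∃! J : Ideal C(Y, ℂ), Maximal (fun J : Ideal C(Y, ℂ) =>
        IsClosed (J : Set C(Y, ℂ)) ∧ ∀ f : C(X, ℂ), f.comp j ∈ J → f = 0) J)
    ↔ (∃! K : Set Y, Minimal (fun K : Set Y => IsClosed K ∧ j '' K = Set.univ) K) := by
  set P : Ideal C(Y, ℂ) → Prop := fun J =>
    IsClosed (J : Set C(Y, ℂ)) ∧ ∀ f : C(X, ℂ), f.comp j ∈ J → f = 0 with hP
  set Q : Set Y → Prop := fun K => IsClosed K ∧ j '' K = Set.univ with hQ
  set Φ : Set Y → Ideal C(Y, ℂ) := fun K => idealOfSet ℂ Kᶜ with hΦ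
  set Ψ : Ideal C(Y, ℂ) → Set Y := fun J => (setOfIdeal J)ᶜ with hΨ
  -- basic facts
  have hΨΦ : ∀ {K : Set Y}, IsClosed K → Ψ (Φ K) = K := by
    intro K hK
    simp only [hΨ, hΦ, setOfIdeal_ofSet_eq_interior, hK.isOpen_compl.interior_eq, compl_compl]
  have hΦΨ : ∀ {J : Ideal C(Y, ℂ)}, IsClosed (J : Set C(Y, ℂ)) → Φ (Ψ J) = J := by
    intro J hJ
    simp only [hΨ, hΦ, compl_compl]
    exact idealOfSet_ofIdeal_isClosed hJ
  have hΦanti : ∀ {K K' : Set Y}, K ⊆ K' → Φ K' ≤ Φ K := by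
    intro K K' h f hf
    rw [hΦ, mem_PhiK] at hf ⊢
    exact fun y hy => hf y (h hy)
  have hΨanti : ∀ {J J' : Ideal C(Y, ℂ)}, J ≤ J' → Ψ J' ⊆ Ψ J := by
    intro J J' h
    simp only [hΨ, Set.compl_subset_compl]
    intro x hx
    obtain ⟨f, hf, hfx⟩ := mem_setOfIdeal.mp hx
    exact mem_setOfIdeal.mpr ⟨f, h hf, hfx⟩
  have hΨclosed : ∀ J : Ideal C(Y, ℂ), IsClosed (Ψ J) := fun J =>
    (setOfIdeal_open J).isClosed_compl
  -- property correspondence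
  have hQP : ∀ {K : Set Y}, Q K → P (Φ K) := by
    intro K ⟨hK, hKu⟩
    exact ⟨idealOfSet_closed ℂ _, (keyA j hK).mpr hKu⟩
  have hPQ : ∀ {J : Ideal C(Y, ℂ)}, P J → Q (Ψ J) := by
    intro J ⟨hJc, hJd⟩
    refine ⟨hΨclosed J, (keyA j (hΨclosed J)).mp ?_⟩
    intro f hf
    exact hJd f (by rw [← hΦΨ hJc]; exact hf)
  -- maximal/minimal correspondence
  have hMaxMin : ∀ {J : Ideal C(Y, ℂ)}, Maximal P J → Minimal Q (Ψ J) := by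
    intro J ⟨hJ, hmax⟩
    refine ⟨hPQ hJ, fun K hK hKle => ?_⟩
    have h1 : J ≤ Φ K := hΦΨ hJ.1 ▸ hΦanti hKle
    have h2 : Φ K ≤ J := hmax (hQP hK) h1
    calc Ψ J ⊆ Ψ (Φ K) := hΨanti h2
      _ = K := hΨΦ hK.1
  have hMinMax : ∀ {K : Set Y}, Minimal Q K → Maximal P (Φ K) := by
    intro K ⟨hK, hmin⟩
    refine ⟨hQP hK, fun J hJ hJle => ?_⟩
    have h1 : Ψ J ⊆ K := hΨΦ hK.1 ▸ hΨanti hJle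
    have h2 : K ⊆ Ψ J := hmin (hPQ hJ) h1
    calc J = Φ (Ψ J) := (hΦΨ hJ.1).symm
      _ ≤ Φ K := hΦanti h2
  constructor
  · rintro ⟨J, hJ, hJuniq⟩
    refine ⟨Ψ J, hMaxMin hJ, fun K hK => ?_⟩
    have := hJuniq (Φ K) (hMinMax hK)
    rw [← hΨΦ hK.1.1, this]
  · rintro ⟨K, hK, hKuniq⟩
    refine ⟨Φ K, hMinMax hK, fun J hJ => ?_⟩
    have := hKuniq (Ψ J) (hMaxMin hJ)
    rw [← hΦΨ hJ.1.1, this]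
end

section
/- Let X and Y be compact Hausdorff spaces, j: Y → X a continuous surjection, and identify C(X) with the C*-subalgebra {f ∘ j : f ∈ C(X)} of C(Y). Then the inclusion (C(Y), C(X)) is essential if and only if the only closed subset K ⊆ Y with j(K) = X is K = Y. -/
/-- For compact Hausdorff X, Y and a continuous surjection j : Y → X,
the inclusion (C(Y), C(X)) is essential iff the only closed K ⊆ Y with j(K) = X is Y. -/
theorem stmt_3 {X Y : Type*} [TopologicalSpace X] [CompactSpace X] [T2Space X]
    [TopologicalSpace Y] [CompactSpace Y] [T2Space Y]
    (j : C(Y, X)) (hj : Function.Surjective j) :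
    (∀ J : Ideal C(Y, ℂ), IsClosed (J : Set C(Y, ℂ)) → J ≠ ⊥ →
        ∃ f : C(X, ℂ), f ≠ 0 ∧ f.comp j ∈ J)
    ↔ (∀ K : Set Y, IsClosed K → j '' K = Set.univ → K = Set.univ) := by
  constructor
  · intro h K hK hjK
    by_contra hKne
    -- J : functions vanishing on K
    set J := ContinuousMap.idealOfSet ℂ Kᶜ with hJdef
    have hJclosed : IsClosed (J : Set C(Y, ℂ)) := ContinuousMap.idealOfSet_closed ℂ Kᶜ
    have hJne : J ≠ ⊥ := by
      obtain ⟨y₀, hy₀⟩ : ∃ y₀, y₀ ∉ K := by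
        by_contra hcon
        push_neg at hcon
        exact hKne (Set.eq_univ_of_forall hcon)
      obtain ⟨g, hg0, hg1, _⟩ := exists_continuous_zero_one_of_isClosed hK
        (isClosed_singleton (x := y₀)) (Set.disjoint_singleton_right.mpr hy₀)
      set gc : C(Y, ℂ) := (ContinuousMap.mk Complex.ofReal Complex.continuous_ofReal).comp g
      have hmem : gc ∈ J := by
        rw [hJdef, ContinuousMap.mem_idealOfSet]
        intro y hy
        simp only [compl_compl] at hy
        simp [gc, hg0 hy]
      intro hbot
      rw [hbot, Ideal.mem_bot] at hmem
      have : gc y₀ = 1 := by simp [gc, hg1 (Set.mem_singleton y₀)]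
      rw [hmem] at this
      simp at this
    obtain ⟨f, hfne, hfJ⟩ := h J hJclosed hJne
    apply hfne
    ext x
    obtain ⟨y, hyK, rfl⟩ : x ∈ j '' K := by rw [hjK]; trivial
    rw [hJdef, ContinuousMap.mem_idealOfSet] at hfJ
    have := hfJ (x := y) (by simpa using hyK)
    simpa using this
  · intro h J hJclosed hJne
    have hJeq : ContinuousMap.idealOfSet ℂ (ContinuousMap.setOfIdeal J) = J := by
      rw [ContinuousMap.idealOfSet_ofIdeal_eq_closure,
        Ideal.closure_eq_of_isClosed J hJclosed]
    set Z := (ContinuousMap.setOfIdeal J)ᶜ with hZdef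
    have hZclosed : IsClosed Z := (ContinuousMap.setOfIdeal_open J).isClosed_compl
    have hZne : Z ≠ Set.univ := by
      intro hcon
      apply hJne
      rw [← hJeq]
      have : ContinuousMap.setOfIdeal J = (∅ : Set Y) := by
        rw [← compl_compl (ContinuousMap.setOfIdeal J), ← hZdef, hcon, Set.compl_univ]
      rw [this]
      exact ContinuousMap.idealOfEmpty_eq_bot
    have hjZne : j '' Z ≠ Set.univ := fun hcon => hZne (h Z hZclosed hcon)
    obtain ⟨x₀, hx₀⟩ : ∃ x₀, x₀ ∉ j '' Z := by
      by_contra hcon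
      push_neg at hcon
      exact hjZne (Set.eq_univ_of_forall hcon)
    have hjZclosed : IsClosed (j '' Z) :=
      (hZclosed.isCompact.image j.continuous).isClosed
    obtain ⟨g, hg0, hg1, _⟩ := exists_continuous_zero_one_of_isClosed hjZclosed
      (isClosed_singleton (x := x₀)) (Set.disjoint_singleton_right.mpr hx₀)
    set f : C(X, ℂ) := (ContinuousMap.mk Complex.ofReal Complex.continuous_ofReal).comp g
    refine ⟨f, ?_, ?_⟩
    · intro hcon
      have h1 : f x₀ = 1 := by simp [f, hg1 (Set.mem_singleton x₀)]
      rw [hcon] at h1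
      simp at h1
    · rw [← hJeq, ContinuousMap.mem_idealOfSet]
      intro y hy
      have : j y ∈ j '' Z := ⟨y, by simpa [hZdef] using hy, rfl⟩
      simp [f, hg0 this]
end

section
/- Let (M,D) be a W*-inclusion acting on a Hilbert space H, and let {p_t} be an increasing net of projections in D with supremum 1 (equivalently, p_t converges to the identity in the strong operator topology). If for every t the corner inclusion (p_t M p_t, p_t D p_t) is norming, then (M,D) is norming. -/
set_option maxHeartbeats 1000000
set_option synthInstance.maxHeartbeats 1000000


/-- The operator on the Hilbert column space `E^n` (with its ℓ²-norm) induced by an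
`m × n` matrix of bounded operators on `E`; this realizes the canonical C*-norm on
matrices over a concrete C*-algebra of operators. -/
noncomputable def matOp {E : Type*} [NormedAddCommGroup E] [InnerProductSpace ℂ E]
    {m n : ℕ} (X : Matrix (Fin m) (Fin n) (E →L[ℂ] E)) :
    (PiLp 2 fun _ : Fin n => E) →L[ℂ] (PiLp 2 fun _ : Fin m => E) :=
  ((PiLp.continuousLinearEquiv 2 ℂ (fun _ : Fin m => E)).symm.toContinuousLinearMap) ∘L
    (ContinuousLinearMap.pi fun i => ∑ j, (X i j) ∘L (ContinuousLinearMap.proj j)) ∘L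
    ((PiLp.continuousLinearEquiv 2 ℂ (fun _ : Fin n => E)).toContinuousLinearMap)

/-- `Dset` norms `Cset`: the norm of every matrix over `Cset` is the supremum of the
norms of its compressions by contractive rows and columns over `Dset`. -/
def NormsPair {E : Type*} [NormedAddCommGroup E] [InnerProductSpace ℂ E]
    (Dset Cset : Set (E →L[ℂ] E)) : Prop :=
  ∀ (d : ℕ) (X : Matrix (Fin d) (Fin d) (E →L[ℂ] E)), (∀ i j, X i j ∈ Cset) →
    ‖matOp X‖ = sSup {r : ℝ |
      ∃ (R : Matrix (Fin 1) (Fin d) (E →L[ℂ] E)) (C₀ : Matrix (Fin d) (Fin 1) (E →L[ℂ] E)),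
        (∀ i j, R i j ∈ Dset) ∧ (∀ i j, C₀ i j ∈ Dset) ∧
        ‖matOp R‖ ≤ 1 ∧ ‖matOp C₀‖ ≤ 1 ∧ r = ‖matOp (R * X * C₀)‖}

lemma matOp_apply {E : Type*} [NormedAddCommGroup E] [InnerProductSpace ℂ E]
    {m n : ℕ} (X : Matrix (Fin m) (Fin n) (E →L[ℂ] E))
    (v : PiLp 2 fun _ : Fin n => E) (i : Fin m) :
    matOp X v i = ∑ j, X i j (v j) := by
  simp [matOp, ContinuousLinearMap.pi_apply, ContinuousLinearMap.sum_apply]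

lemma matOp_comp {E : Type*} [NormedAddCommGroup E] [InnerProductSpace ℂ E]
    {m n k : ℕ} (A : Matrix (Fin m) (Fin n) (E →L[ℂ] E)) (B : Matrix (Fin n) (Fin k) (E →L[ℂ] E)) :
    matOp (A * B) = (matOp A) ∘L (matOp B) := by
  ext v i
  simp only [ContinuousLinearMap.comp_apply, matOp_apply, Matrix.mul_apply,
    ContinuousLinearMap.sum_apply, ContinuousLinearMap.mul_apply]
  rw [Finset.sum_comm]
  congr 1
  ext j
  rw [map_sum]

lemma matOp_zero {E : Type*} [NormedAddCommGroup E] [InnerProductSpace ℂ E]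
    {m n : ℕ} : matOp (0 : Matrix (Fin m) (Fin n) (E →L[ℂ] E)) = 0 := by
  ext v i
  simp [matOp_apply]

lemma norm_matOp_compress_le {E : Type*} [NormedAddCommGroup E] [InnerProductSpace ℂ E]
    {d : ℕ} (R : Matrix (Fin 1) (Fin d) (E →L[ℂ] E)) (X : Matrix (Fin d) (Fin d) (E →L[ℂ] E))
    (C₀ : Matrix (Fin d) (Fin 1) (E →L[ℂ] E)) (hR : ‖matOp R‖ ≤ 1) (hC : ‖matOp C₀‖ ≤ 1) :
    ‖matOp (R * X * C₀)‖ ≤ ‖matOp X‖ := by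
  have h1 : ‖matOp (R * X * C₀)‖ ≤ ‖matOp (R * X)‖ * ‖matOp C₀‖ := by
    rw [matOp_comp]; exact ContinuousLinearMap.opNorm_comp_le _ _
  have h2 : ‖matOp (R * X)‖ ≤ ‖matOp R‖ * ‖matOp X‖ := by
    rw [matOp_comp]; exact ContinuousLinearMap.opNorm_comp_le _ _
  nlinarith [norm_nonneg (matOp (R * X)), norm_nonneg (matOp X), norm_nonneg (matOp R),
    norm_nonneg (matOp C₀)]

/-- If (M,D) is a W*-inclusion, (p_t) is an increasing net of projections
in D converging strongly to the identity, and each corner inclusion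
(p_t M p_t, p_t D p_t) is norming, then (M,D) is norming. -/
theorem stmt_12 {H : Type*} [NormedAddCommGroup H] [InnerProductSpace ℂ H] [CompleteSpace H]
    (M D : VonNeumannAlgebra H)
    (hDM : (D : Set (H →L[ℂ] H)) ⊆ (M : Set (H →L[ℂ] H)))
    {ι : Type*} [Preorder ι] [Nonempty ι] [IsDirected ι (· ≤ ·)]
    (p : ι → (H →L[ℂ] H)) (hpD : ∀ t, p t ∈ D)
    (hproj : ∀ t, p t * p t = p t ∧ star (p t) = p t)
    (hmono : ∀ s t, s ≤ t → p s * p t = p s)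
    (hsot : ∀ ξ : H, Filter.Tendsto (fun t => p t ξ) Filter.atTop (nhds ξ))
    (hcorner : ∀ t, NormsPair {y | ∃ d ∈ D, y = p t * d * p t}
        {y | ∃ x ∈ M, y = p t * x * p t}) :
    NormsPair (D : Set (H →L[ℂ] H)) (M : Set (H →L[ℂ] H)) := by
  haveI : (Filter.atTop : Filter ι).NeBot := Filter.atTop_neBot_iff.2 ⟨‹_›, ‹_›⟩
  have hp1 : ∀ t, ‖p t‖ ≤ 1 := by
    intro t
    have h := CStarRing.norm_star_mul_self (x := p t)
    rw [(hproj t).2, (hproj t).1] at h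
    nlinarith [sq_nonneg (‖p t‖ - 1), norm_nonneg (p t)]
  -- strong convergence pushed through the net of projections
  have hpt : ∀ (g : ι → H) (η : H), Filter.Tendsto g Filter.atTop (nhds η) →
      Filter.Tendsto (fun t => p t (g t)) Filter.atTop (nhds η) := by
    intro g η hg
    rw [tendsto_iff_norm_sub_tendsto_zero]
    have hb : ∀ t, ‖p t (g t) - η‖ ≤ ‖g t - η‖ + ‖p t η - η‖ := by
      intro t
      calc ‖p t (g t) - η‖ = ‖p t (g t - η) + (p t η - η)‖ := by
            congr 1; rw [map_sub]; abel
        _ ≤ ‖p t (g t - η)‖ + ‖p t η - η‖ := norm_add_le _ _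
        _ ≤ ‖g t - η‖ + ‖p t η - η‖ := by
            gcongr
            calc ‖p t (g t - η)‖ ≤ ‖p t‖ * ‖g t - η‖ := (p t).le_opNorm _
              _ ≤ 1 * ‖g t - η‖ := by gcongr; exact hp1 t
              _ = ‖g t - η‖ := one_mul _
    have hlim : Filter.Tendsto (fun t => ‖g t - η‖ + ‖p t η - η‖) Filter.atTop (nhds 0) := by
      have h1 := (tendsto_iff_norm_sub_tendsto_zero.1 hg)
      have h2 := (tendsto_iff_norm_sub_tendsto_zero.1 (hsot η))
      simpa using h1.add h2
    exact squeeze_zero (fun t => norm_nonneg _) hb hlim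
  intro d X hX
  set S : Set ℝ := {r : ℝ |
      ∃ (R : Matrix (Fin 1) (Fin d) (H →L[ℂ] H)) (C₀ : Matrix (Fin d) (Fin 1) (H →L[ℂ] H)),
        (∀ i j, R i j ∈ (D : Set (H →L[ℂ] H))) ∧ (∀ i j, C₀ i j ∈ (D : Set (H →L[ℂ] H))) ∧
        ‖matOp R‖ ≤ 1 ∧ ‖matOp C₀‖ ≤ 1 ∧ r = ‖matOp (R * X * C₀)‖} with hS
  have hub : ∀ r ∈ S, r ≤ ‖matOp X‖ := by
    rintro r ⟨R, C₀, _, _, hRn, hCn, rfl⟩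
    exact norm_matOp_compress_le R X C₀ hRn hCn
  have hbdd : BddAbove S := ⟨‖matOp X‖, hub⟩
  refine le_antisymm (le_of_forall_lt fun c hc => ?_) (Real.sSup_le hub (norm_nonneg (matOp X)))
  -- find a vector nearly attaining the norm
  obtain ⟨ξ, hξ, hcξ⟩ := (matOp X).exists_lt_apply_of_lt_opNorm hc
  -- compress X to the corners
  set Y : ι → Matrix (Fin d) (Fin d) (H →L[ℂ] H) := fun t i j => p t * X i j * p t with hY
  -- convergence of the compressions applied to ξ
  have hcompt : ∀ i, Filter.Tendsto (fun t => ∑ j, (Y t i j) (ξ j)) Filter.atTop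
      (nhds (∑ j, X i j (ξ j))) := by
    intro i
    refine tendsto_finset_sum _ fun j _ => ?_
    have : Filter.Tendsto (fun t => (X i j) (p t (ξ j))) Filter.atTop (nhds (X i j (ξ j))) :=
      ((X i j).continuous.tendsto _).comp (hsot (ξ j))
    exact hpt _ _ this
  have key : ∀ (Z : Matrix (Fin d) (Fin d) (H →L[ℂ] H)),
      (PiLp.continuousLinearEquiv 2 ℂ (fun _ : Fin d => H)).symm (fun i => ∑ j, Z i j (ξ j))
        = matOp Z ξ := by
    intro Z
    refine PiLp.ext fun i => ?_
    rw [matOp_apply]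
    rfl
  have htend : Filter.Tendsto (fun t => matOp (Y t) ξ) Filter.atTop (nhds (matOp X ξ)) := by
    have hpi : Filter.Tendsto (fun t => (fun i => ∑ j, (Y t i j) (ξ j) : ∀ _ : Fin d, H))
        Filter.atTop (nhds (fun i => ∑ j, X i j (ξ j))) := tendsto_pi_nhds.2 hcompt
    have hcont := ((PiLp.continuousLinearEquiv 2 ℂ (fun _ : Fin d => H)).symm.continuous.tendsto
      (fun i => ∑ j, X i j (ξ j))).comp hpi
    rw [key X] at hcont
    exact hcont.congr fun t' => key (Y t')
  have hnorm : Filter.Tendsto (fun t => ‖matOp (Y t) ξ‖) Filter.atTop (nhds ‖matOp X ξ‖) :=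
    (continuous_norm.tendsto _).comp htend
  obtain ⟨t, ht⟩ := (hnorm.eventually (eventually_gt_nhds hcξ)).exists
  -- c < ‖matOp (Y t)‖
  have hclt : c < ‖matOp (Y t)‖ := by
    refine lt_of_lt_of_le ht ?_
    calc ‖matOp (Y t) ξ‖ ≤ ‖matOp (Y t)‖ * ‖ξ‖ := (matOp (Y t)).le_opNorm _
      _ ≤ ‖matOp (Y t)‖ * 1 := mul_le_mul_of_nonneg_left (le_of_lt hξ) (ContinuousLinearMap.opNorm_nonneg _)
      _ = ‖matOp (Y t)‖ := mul_one _
  -- the corner is norming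
  have hYM : ∀ i j, Y t i j ∈ {y | ∃ x ∈ M, y = p t * x * p t} := fun i j => ⟨X i j, hX i j, rfl⟩
  have hcor := hcorner t d (Y t) hYM
  set S' : Set ℝ := {r : ℝ |
      ∃ (R : Matrix (Fin 1) (Fin d) (H →L[ℂ] H)) (C₀ : Matrix (Fin d) (Fin 1) (H →L[ℂ] H)),
        (∀ i j, R i j ∈ {y | ∃ d ∈ D, y = p t * d * p t}) ∧
        (∀ i j, C₀ i j ∈ {y | ∃ d ∈ D, y = p t * d * p t}) ∧
        ‖matOp R‖ ≤ 1 ∧ ‖matOp C₀‖ ≤ 1 ∧ r = ‖matOp (R * Y t * C₀)‖} with hS'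
  have hS'ne : S'.Nonempty := by
    refine ⟨‖matOp ((0 : Matrix (Fin 1) (Fin d) (H →L[ℂ] H)) * Y t * 0)‖, 0, 0,
      ?_, ?_, ?_, ?_, rfl⟩
    · intro i j; exact ⟨0, zero_mem D, by simp⟩
    · intro i j; exact ⟨0, zero_mem D, by simp⟩
    · rw [matOp_zero, ContinuousLinearMap.opNorm_zero]; exact zero_le_one
    · rw [matOp_zero, ContinuousLinearMap.opNorm_zero]; exact zero_le_one
  have hcS' : c < sSup S' := by rw [hS']; rw [hS'] at hcor; rw [← hcor]; exact hclt
  obtain ⟨r, hrS', hcr⟩ := exists_lt_of_lt_csSup hS'ne hcS'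
  obtain ⟨R, C₀, hRD, hCD, hRn, hCn, hr⟩ := hrS'
  -- identify the compression with the compression of X
  have hPmul : R * Y t * C₀ = R * X * C₀ := by
    have hRP : ∀ i j, R i j * p t = R i j := by
      intro i j
      obtain ⟨dm, _, heq⟩ := hRD i j
      rw [heq, mul_assoc, (hproj t).1]
    have hPC : ∀ i j, p t * C₀ i j = C₀ i j := by
      intro i j
      obtain ⟨dm, _, heq⟩ := hCD i j
      rw [heq, ← mul_assoc, ← mul_assoc, (hproj t).1]
    set P : Matrix (Fin d) (Fin d) (H →L[ℂ] H) := Matrix.diagonal (fun _ => p t) with hP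
    have hYP : Y t = P * X * P := by
      refine Matrix.ext fun i j => ?_
      simp [hP, hY, Matrix.mul_diagonal, Matrix.diagonal_mul, mul_assoc]
    have hRP' : R * P = R := by
      refine Matrix.ext fun i j => ?_
      rw [hP, Matrix.mul_diagonal]; exact hRP i j
    have hPC' : P * C₀ = C₀ := by
      refine Matrix.ext fun i j => ?_
      rw [hP, Matrix.diagonal_mul]; exact hPC i j
    calc R * Y t * C₀ = R * (P * X * P) * C₀ := by rw [hYP]
      _ = (R * P) * X * (P * C₀) := by
          simp only [Matrix.mul_assoc]
      _ = R * X * (P * C₀) := by rw [hRP']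
      _ = R * X * C₀ := by rw [hPC']
  have hrS : r ∈ S := by
    refine ⟨R, C₀, ?_, ?_, hRn, hCn, ?_⟩
    · intro i j
      obtain ⟨dm, hdm, heq⟩ := hRD i j
      rw [heq]; exact mul_mem (mul_mem (hpD t) hdm) (hpD t)
    · intro i j
      obtain ⟨dm, hdm, heq⟩ := hCD i j
      rw [heq]; exact mul_mem (mul_mem (hpD t) hdm) (hpD t)
    · rw [hr, hPmul]
  exact lt_of_lt_of_le hcr (le_csSup hbdd hrS)
end
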